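/- arXiv:2112.10395 — 6 statements merged into one kernel-verified Lean document; each statement's English description precedes it below -/
import Mathlib

section
/- Let G be a connected simple graph of order n. Then for every integer k with rad(G) < k ≤ diam(G), there exist at least two distinct vertices of G whose eccentricity equals k. -/
/-- Eccentricity of a vertex in a (finite connected) simple graph:
the maximum distance from `v` to any vertex. -/
noncomputable def SimpleGraph.mecc {V : Type*} (G : SimpleGraph V) (v : V) : ℕ :=
  sSup (Set.range (G.dist v))

/-- Radius: the minimum eccentricity. -/
noncomputable def SimpleGraph.mrad {V : Type*} (G : SimpleGraph V) : ℕ :=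
  sInf (Set.range G.mecc)

/-- Diameter: the maximum eccentricity. -/
noncomputable def SimpleGraph.mdiam {V : Type*} (G : SimpleGraph V) : ℕ :=
  sSup (Set.range G.mecc)

/-- The center: the set of vertices of minimum eccentricity. -/
noncomputable def SimpleGraph.mcenter {V : Type*} (G : SimpleGraph V) : Set V :=
  {v | G.mecc v = G.mrad}

/-- The annulus: the set of vertices of intermediate eccentricity. -/
noncomputable def SimpleGraph.mannulus {V : Type*} (G : SimpleGraph V) : Set V :=
  {v | G.mrad < G.mecc v ∧ G.mecc v < G.mdiam}

/-- The periphery: the set of vertices of maximum eccentricity. -/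
noncomputable def SimpleGraph.mperiphery {V : Type*} (G : SimpleGraph V) : Set V :=
  {v | G.mecc v = G.mdiam}


section AuxEcc
variable {V : Type*} [Fintype V] {G : SimpleGraph V}

lemma aux_dist_le_mecc (x z : V) : G.dist x z ≤ G.mecc x :=
  le_csSup (Set.finite_range _).bddAbove ⟨z, rfl⟩

lemma aux_mecc_le (hG : G.Connected) (x y : V) :
    G.mecc x ≤ G.dist x y + G.mecc y := by
  have : Nonempty V := hG.nonempty
  apply csSup_le (Set.range_nonempty _)
  rintro _ ⟨z, rfl⟩
  calc G.dist x z ≤ G.dist x y + G.dist y z := hG.dist_triangle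
    _ ≤ _ := by gcongr; exact aux_dist_le_mecc y z

lemma aux_mecc_exists (hG : G.Connected) (x : V) : ∃ z, G.dist x z = G.mecc x := by
  have : Nonempty V := hG.nonempty
  have h := (Set.range_nonempty (G.dist x)).csSup_mem (Set.finite_range _)
  exact h

/-- Key crossing lemma: if `mecc c < k ≤ mecc w` then there is a vertex `x`
with `mecc x = k` and `dist x w ≤ dist c w`. -/
lemma aux_key (hG : G.Connected) (k : ℕ) :
    ∀ n c w, G.dist c w = n → G.mecc c < k → k ≤ G.mecc w →
      ∃ x, G.mecc x = k ∧ G.dist x w ≤ G.dist c w := by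
  intro n
  induction n using Nat.strong_induction_on with
  | _ n ih =>
    intro c w hd h1 h2
    rcases Nat.eq_zero_or_pos n with h0 | hpos
    · subst h0
      have : c = w := (hG.dist_eq_zero_iff).mp hd
      subst this
      omega
    · obtain ⟨p, hp⟩ := (hG c w).exists_walk_length_eq_dist
      cases p with
      | nil => rw [hd] at hp; simp at hp; omega
      | @cons _ a _ hadj q =>
        have hq : G.dist a w ≤ n - 1 := by
          have h3 := G.dist_le q
          have : q.length + 1 = n := by
            simpa [hd] using hp
          omega
        by_cases hk : G.mecc a < k
        · obtain ⟨x, hx1, hx2⟩ := ih (G.dist a w) (by omega) a w rfl hk h2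
          exact ⟨x, hx1, by omega⟩
        · push_neg at hk
          have hda : G.dist a c = 1 := SimpleGraph.dist_eq_one_iff_adj.mpr hadj.symm
          have hle : G.mecc a ≤ G.mecc c + 1 := by
            have := aux_mecc_le hG a c
            omega
          refine ⟨a, by omega, ?_⟩
          calc G.dist a w ≤ n - 1 := hq
            _ ≤ G.dist c w := by omega

end AuxEcc

theorem eccentricities_between_radius_and_diameter_attained_twice
    {V : Type*} [Fintype V] (G : SimpleGraph V) (hG : G.Connected)
    (n : ℕ) (hn : Fintype.card V = n)
    (k : ℕ) (hk1 : G.mrad < k) (hk2 : k ≤ G.mdiam) :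
    ∃ u v : V, u ≠ v ∧ G.mecc u = k ∧ G.mecc v = k := by
  have hne : Nonempty V := hG.nonempty
  -- a central vertex
  obtain ⟨c, hc⟩ : ∃ c, G.mecc c = G.mrad := Nat.sInf_mem (Set.range_nonempty G.mecc)
  -- a peripheral vertex
  obtain ⟨u, hu⟩ : ∃ u, G.mecc u = G.mdiam :=
    (Set.range_nonempty G.mecc).csSup_mem (Set.finite_range _)
  -- first vertex with eccentricity k
  obtain ⟨v, hv, -⟩ := aux_key hG k (G.dist c u) c u rfl (by omega) (by omega)
  -- a vertex realizing the eccentricity of v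
  obtain ⟨w, hw⟩ := aux_mecc_exists hG v
  rw [hv] at hw
  rw [SimpleGraph.dist_comm] at hw
  have hwk : k ≤ G.mecc w := by
    have := aux_dist_le_mecc (G := G) w v
    omega
  -- second vertex with eccentricity k, close to w
  obtain ⟨x, hx1, hx2⟩ := aux_key hG k (G.dist c w) c w rfl (by omega) hwk
  have hcw : G.dist c w ≤ G.mrad := by
    have := aux_dist_le_mecc (G := G) c w
    omega
  refine ⟨x, v, ?_, hx1, hv⟩
  intro h
  rw [h, SimpleGraph.dist_comm] at hx2
  omega
end

section
/- Let G be a connected simple graph and let H be the peripheral subgraph of G, i.e., the subgraph of G induced by the periphery P(G). If H is connected (and nonempty), then rad(H) ≥ diam(G) and |V(H)| ≥ 2·diam(G). -/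
section Helpers
open SimpleGraph

variable {V : Type*} {G : SimpleGraph V}

lemma dist_le_mecc [Finite V] (G : SimpleGraph V) (v u : V) : G.dist v u ≤ G.mecc v :=
  le_csSup (Set.finite_range _).bddAbove ⟨u, rfl⟩

lemma exists_mecc [Finite V] [Nonempty V] (G : SimpleGraph V) (v : V) :
    ∃ u, G.dist v u = G.mecc v :=
  Nat.sSup_mem (Set.range_nonempty (G.dist v)) (Set.finite_range _).bddAbove

lemma mecc_le_mdiam [Finite V] (G : SimpleGraph V) (v : V) : G.mecc v ≤ G.mdiam :=
  le_csSup (Set.finite_range _).bddAbove ⟨v, rfl⟩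

lemma mrad_le_mecc (G : SimpleGraph V) (v : V) : G.mrad ≤ G.mecc v :=
  Nat.sInf_le ⟨v, rfl⟩

lemma exists_mrad [Nonempty V] (G : SimpleGraph V) : ∃ v, G.mecc v = G.mrad :=
  Nat.sInf_mem (Set.range_nonempty G.mecc)

lemma dist_le_dist_induce {s : Set V} {a b : ↥s}
    (h : (G.induce s).Reachable a b) : G.dist ↑a ↑b ≤ (G.induce s).dist a b := by
  obtain ⟨p, _, hp⟩ := h.exists_path_of_dist
  calc G.dist ↑a ↑b ≤ (p.map (SimpleGraph.Embedding.induce s).toHom).length :=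
        SimpleGraph.dist_le _
    _ = p.length := SimpleGraph.Walk.length_map _ _
    _ = (G.induce s).dist a b := hp

lemma reachable_induce_of_support' {s : Set V} {u v : V} (p : G.Walk u v)
    (hs : ∀ x ∈ p.support, x ∈ s) :
    (G.induce s).Reachable ⟨u, hs u p.start_mem_support⟩ ⟨v, hs v p.end_mem_support⟩ := by
  induction p with
  | nil => exact Reachable.refl _
  | @cons a b c hab q ih =>
    have hb : b ∈ s := hs b (by simp)
    have h1 : (G.induce s).Adj ⟨a, hs a (by simp)⟩ ⟨b, hb⟩ := by simp [hab]
    exact h1.reachable.trans (ih fun x hx => hs x (by simp [hx]))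

lemma induce_compl_connected (hG : G.Connected) (c v : V) (hcv : c ≠ v)
    (hmax : ∀ x, G.dist c x ≤ G.dist c v) :
    (G.induce ({v}ᶜ : Set V)).Connected := by
  classical
  have hkey : ∀ (x : V) (hxv : x ≠ v),
      (G.induce ({v}ᶜ : Set V)).Reachable ⟨c, by simpa using hcv⟩ ⟨x, by simpa using hxv⟩ := by
    intro x hxv
    obtain ⟨p, _, hp⟩ := (hG.preconnected c x).exists_path_of_dist
    have hsup : ∀ z ∈ p.support, z ∈ ({v}ᶜ : Set V) := by
      intro z hz
      simp only [Set.mem_compl_iff, Set.mem_singleton_iff]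
      intro hzv
      have hz' : v ∈ p.support := hzv ▸ hz
      have h1 : G.dist c v ≤ (p.takeUntil v hz').length := SimpleGraph.dist_le _
      have h2 : G.dist v x ≤ (p.dropUntil v hz').length := SimpleGraph.dist_le _
      have h3 : (p.takeUntil v hz').length + (p.dropUntil v hz').length = p.length := by
        rw [← SimpleGraph.Walk.length_append, SimpleGraph.Walk.take_spec]
      have h4 : G.dist c x ≤ G.dist c v := hmax x
      have h5 : G.dist v x = 0 := by omega
      exact hxv ((hG.preconnected v x).dist_eq_zero_iff.mp h5).symm
    exact reachable_induce_of_support' p hsup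
  haveI : Nonempty ↥({v}ᶜ : Set V) := ⟨⟨c, by simpa using hcv⟩⟩
  exact ⟨fun a b =>
    (hkey a.1 (Set.mem_compl_singleton_iff.mp a.2)).symm.trans
      (hkey b.1 (Set.mem_compl_singleton_iff.mp b.2))⟩

lemma card_compl_singleton {V : Type*} [Finite V] (v : V) :
    Nat.card ↥({v}ᶜ : Set V) = Nat.card V - 1 := by
  rw [Nat.card_coe_set_eq]
  have := Set.ncard_add_ncard_compl ({v} : Set V)
  simp at this
  have h2 : (Set.univ : Set V).ncard = Nat.card V := Set.ncard_univ V
  omega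

lemma exists_ne_of_two_le_card {V : Type*} [Finite V] (h : 2 ≤ Nat.card V) (c : V) :
    ∃ x : V, x ≠ c := by
  have h1 := card_compl_singleton c
  have h2 : 0 < Nat.card ↥({c}ᶜ : Set V) := by omega
  obtain ⟨x⟩ := (Nat.card_pos_iff.mp h2).1
  exact ⟨x.1, Set.mem_compl_singleton_iff.mp x.2⟩

lemma exists_adj_of_connected (hG : G.Connected) {v c : V} (hvc : v ≠ c) :
    ∃ u, G.Adj v u := by
  obtain ⟨p⟩ := hG.preconnected v c
  cases p with
  | nil => exact absurd rfl hvc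
  | cons h q => exact ⟨_, h⟩

lemma two_mrad_le_card : ∀ (n : ℕ) (V : Type u) [Finite V] (G : SimpleGraph V),
    Nat.card V ≤ n → G.Connected → 2 * G.mrad ≤ Nat.card V := by
  intro n
  induction n with
  | zero =>
    intro V _ G hcard hG
    haveI := hG.nonempty
    have : 0 < Nat.card V := Nat.card_pos
    omega
  | succ n ih =>
    intro V _ G hcard hG
    classical
    haveI := hG.nonempty
    have hpos : 0 < Nat.card V := Nat.card_pos
    by_cases h2 : Nat.card V ≤ 2
    · -- base case
      obtain ⟨c⟩ := hG.nonempty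
      have hecc : G.mecc c ≤ Nat.card V - 1 := by
        obtain ⟨y, hy⟩ := exists_mecc G c
        rw [← hy]
        obtain ⟨p, hp, hl⟩ := (hG.preconnected c y).exists_path_of_dist
        haveI := Fintype.ofFinite V
        have := hp.length_lt
        rw [Nat.card_eq_fintype_card]
        omega
      have := mrad_le_mecc G c
      omega
    · push_neg at h2
      obtain ⟨c⟩ := hG.nonempty
      obtain ⟨v, hv⟩ := exists_mecc G c
      have hmax : ∀ x, G.dist c x ≤ G.dist c v := fun x => hv ▸ dist_le_mecc G c x
      have hcv : c ≠ v := by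
        obtain ⟨x, hx⟩ := exists_ne_of_two_le_card (by omega) c
        have hposd := hG.pos_dist_of_ne (Ne.symm hx)
        intro h
        have := hmax x
        rw [← h, SimpleGraph.dist_self] at this
        omega
      set s₁ : Set V := {v}ᶜ with hs₁
      have hG1 : (G.induce s₁).Connected := induce_compl_connected hG c v hcv hmax
      haveI : Nonempty ↥s₁ := hG1.nonempty
      have hcard1 : Nat.card ↥s₁ = Nat.card V - 1 := card_compl_singleton v
      obtain ⟨u, hadj_vu⟩ := exists_adj_of_connected hG (Ne.symm hcv)
      have huv : u ≠ v := hadj_vu.ne'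
      set u' : ↥s₁ := ⟨u, Set.mem_compl_singleton_iff.mpr huv⟩ with hu'
      obtain ⟨w', hw'⟩ := exists_mecc (G.induce s₁) u'
      have hmax1 : ∀ y, (G.induce s₁).dist u' y ≤ (G.induce s₁).dist u' w' :=
        fun y => hw' ▸ dist_le_mecc _ _ _
      have huw : u' ≠ w' := by
        obtain ⟨x, hx⟩ := exists_ne_of_two_le_card (V := ↥s₁) (by omega) u'
        have hposd := hG1.pos_dist_of_ne (Ne.symm hx)
        intro h
        have := hmax1 x
        rw [← h, SimpleGraph.dist_self] at this
        omega
      set s₂ : Set ↥s₁ := {w'}ᶜ with hs₂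
      have hG2 : ((G.induce s₁).induce s₂).Connected :=
        induce_compl_connected hG1 u' w' huw hmax1
      haveI : Nonempty ↥s₂ := hG2.nonempty
      have hcard2 : Nat.card ↥s₂ = Nat.card ↥s₁ - 1 := card_compl_singleton w'
      obtain ⟨z', hadj_wz⟩ := exists_adj_of_connected hG1 (Ne.symm huw)
      have hzw : z' ≠ w' := hadj_wz.ne'
      set G₂ := (G.induce s₁).induce s₂ with hG₂def
      have hIH : 2 * G₂.mrad ≤ Nat.card ↥s₂ := ih ↥s₂ G₂ (by omega) hG2
      -- distances chain
      have chain : ∀ a b : ↥s₂, G.dist a.1.1 b.1.1 ≤ G₂.dist a b := by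
        intro a b
        have t1 : (G.induce s₁).dist a.1 b.1 ≤ G₂.dist a b :=
          dist_le_dist_induce (hG2.preconnected a b)
        have t0 : G.dist a.1.1 b.1.1 ≤ (G.induce s₁).dist a.1 b.1 :=
          dist_le_dist_induce (hG1.preconnected a.1 b.1)
        omega
      obtain ⟨x₂, hx₂⟩ := exists_mrad G₂
      set x : V := x₂.1.1 with hx
      set u₂ : ↥s₂ := ⟨u', Set.mem_compl_singleton_iff.mpr huw⟩ with hu₂
      set z₂ : ↥s₂ := ⟨z', Set.mem_compl_singleton_iff.mpr hzw⟩ with hz₂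
      have hadjG_vu : G.Adj v u := hadj_vu
      have hadjG_wz : G.Adj w'.1 z'.1 := hadj_wz
      have key : G.mecc x ≤ G₂.mecc x₂ + 1 := by
        obtain ⟨y, hy⟩ := exists_mecc G x
        rw [← hy]
        by_cases hyv : y = v
        · rw [hyv]
          have t1 : G.dist x v ≤ G.dist x u + G.dist u v := hG.dist_triangle
          have t2 : G.dist u v ≤ 1 := by
            have : G.dist u v ≤ (SimpleGraph.Walk.cons hadjG_vu.symm SimpleGraph.Walk.nil).length :=
              SimpleGraph.dist_le _
            simpa using this
          have t3 : G.dist x u ≤ G₂.dist x₂ u₂ := chain x₂ u₂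
          have t4 : G₂.dist x₂ u₂ ≤ G₂.mecc x₂ := dist_le_mecc _ _ _
          omega
        · by_cases hyw : y = w'.1
          · rw [hyw]
            have t1 : G.dist x w'.1 ≤ G.dist x z'.1 + G.dist z'.1 w'.1 := hG.dist_triangle
            have t2 : G.dist z'.1 w'.1 ≤ 1 := by
              have : G.dist z'.1 w'.1 ≤
                  (SimpleGraph.Walk.cons hadjG_wz.symm SimpleGraph.Walk.nil).length :=
                SimpleGraph.dist_le _
              simpa using this
            have t3 : G.dist x z'.1 ≤ G₂.dist x₂ z₂ := chain x₂ z₂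
            have t4 : G₂.dist x₂ z₂ ≤ G₂.mecc x₂ := dist_le_mecc _ _ _
            omega
          · have hy1 : y ∈ s₁ := Set.mem_compl_singleton_iff.mpr hyv
            have hy2 : (⟨y, hy1⟩ : ↥s₁) ∈ s₂ := by
              apply Set.mem_compl_singleton_iff.mpr
              intro h
              exact hyw (congrArg Subtype.val h)
            set y₂ : ↥s₂ := ⟨⟨y, hy1⟩, hy2⟩ with hy₂
            have t3 : G.dist x y ≤ G₂.dist x₂ y₂ := chain x₂ y₂
            have t4 : G₂.dist x₂ y₂ ≤ G₂.mecc x₂ := dist_le_mecc _ _ _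
            omega
      have hfin : G.mrad ≤ G₂.mrad + 1 := by
        have := mrad_le_mecc G x
        omega
      omega

end Helpers

theorem connected_peripheral_subgraph_radius_and_order
    {V : Type*} [Fintype V] (G : SimpleGraph V) (hG : G.Connected)
    (hH : (G.induce G.mperiphery).Connected) :
    G.mdiam ≤ (G.induce G.mperiphery).mrad ∧
    2 * G.mdiam ≤ G.mperiphery.ncard := by
  haveI := hG.nonempty
  haveI := hH.nonempty
  have key : ∀ p : ↥G.mperiphery, G.mdiam ≤ (G.induce G.mperiphery).mecc p := by
    intro p
    have hp : G.mecc p.1 = G.mdiam := p.2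
    obtain ⟨w, hw⟩ := exists_mecc G p.1
    have hwper : w ∈ G.mperiphery := by
      have h1 : G.mecc w ≤ G.mdiam := mecc_le_mdiam G w
      have h2 : G.mdiam ≤ G.mecc w := by
        have h3 : G.dist w p.1 ≤ G.mecc w := dist_le_mecc G w p.1
        rw [SimpleGraph.dist_comm] at h3
        omega
      exact le_antisymm h1 h2
    set w' : ↥G.mperiphery := ⟨w, hwper⟩ with hw'
    have t1 : G.dist p.1 w ≤ (G.induce G.mperiphery).dist p w' :=
      dist_le_dist_induce (hH.preconnected p w')
    have t2 : (G.induce G.mperiphery).dist p w' ≤ (G.induce G.mperiphery).mecc p :=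
      dist_le_mecc _ _ _
    omega
  have part1 : G.mdiam ≤ (G.induce G.mperiphery).mrad := by
    obtain ⟨r, hr⟩ := exists_mrad (G.induce G.mperiphery)
    rw [← hr]
    exact key r
  refine ⟨part1, ?_⟩
  have h2 : 2 * (G.induce G.mperiphery).mrad ≤ Nat.card ↥G.mperiphery :=
    two_mrad_le_card (Nat.card ↥G.mperiphery) _ _ le_rfl hH
  have h3 : G.mperiphery.ncard = Nat.card ↥G.mperiphery :=
    (Nat.card_coe_set_eq _).symm
  omega
end

section
/- Let G be a connected simple graph and let W be the annular subgraph of G, i.e., the subgraph of G induced by the annulus A(G). If W is nonempty and connected, then rad(W) ≥ 2, and consequently |A(G)| ≥ 4. -/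
/-! If `v` lies in the annulus and `u` is an eccentric vertex of `v`, either `u` lies in the
annulus too, at distance `e(v) ≥ 2` from `v`, or `u` is peripheral. In the latter case the
eccentricity, which changes by at most one along an edge, climbs from `rad` to `diam` along a
geodesic from a central vertex to `u`; it takes the value `rad + 1` at a vertex `y` with
`d(y, u) ≤ rad - 1`, so `y` is in the annulus and `d(v, y) ≥ d(v, u) - d(y, u) ≥ 2`. Hence no vertex
of `W` is adjacent to all others, i.e. `rad(W) ≥ 2`. A connected graph of radius at least two
contains an induced path `x a b` and a vertex at distance at least two from `a`: four vertices. -/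

namespace SimpleGraph

variable {V : Type*} {G : SimpleGraph V}

lemma mrad_le_mecc (G : SimpleGraph V) (v : V) : G.mrad ≤ G.mecc v :=
  Nat.sInf_le ⟨v, rfl⟩

lemma exists_mecc_eq_mrad [Nonempty V] (G : SimpleGraph V) : ∃ c, G.mecc c = G.mrad :=
  Nat.sInf_mem (Set.range_nonempty _)

lemma Walk.exists_eq_add_dist_le {f : V → ℕ} (hf : ∀ a b, G.Adj a b → f b ≤ f a + 1)
    {x u : V} (p : G.Walk x u) {m : ℕ} (hxm : f x ≤ m) (hmu : m ≤ f u) :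
    ∃ y, f y = m ∧ m + G.dist y u ≤ f x + p.length := by
  induction p with
  | nil => exact ⟨_, le_antisymm hxm hmu, by simpa using hmu⟩
  | @cons a b u hab q ih =>
    have := hf a b hab
    by_cases hbm : f b ≤ m
    · obtain ⟨y, hy, hdist⟩ := ih hbm hmu
      exact ⟨y, hy, by simp only [Walk.length_cons]; omega⟩
    · have := dist_le (Walk.cons hab q)
      exact ⟨a, by omega, by simp only [Walk.length_cons] at this ⊢; omega⟩

section Finite

variable [Finite V]

lemma exists_dist_eq_mecc (G : SimpleGraph V) (v : V) : ∃ u, G.dist v u = G.mecc v :=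
  Nat.sSup_mem (Set.range_nonempty_iff_nonempty.2 ⟨v⟩) (Set.finite_range _).bddAbove

lemma dist_le_mecc (G : SimpleGraph V) (v u : V) : G.dist v u ≤ G.mecc v :=
  le_csSup (Set.finite_range _).bddAbove ⟨u, rfl⟩

lemma mecc_le_mdiam (G : SimpleGraph V) (v : V) : G.mecc v ≤ G.mdiam :=
  le_csSup (Set.finite_range _).bddAbove ⟨v, rfl⟩

lemma Connected.mecc_le_mecc_add_one (hG : G.Connected) {a b : V} (hab : G.Adj a b) :
    G.mecc b ≤ G.mecc a + 1 := by
  obtain ⟨w, hw⟩ := G.exists_dist_eq_mecc b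
  calc G.mecc b = G.dist b w := hw.symm
    _ ≤ G.dist b a + G.dist a w := hG.dist_triangle
    _ ≤ 1 + G.mecc a := by
      gcongr
      · exact (dist_eq_one_iff_adj.2 hab.symm).le
      · exact G.dist_le_mecc a w
    _ = G.mecc a + 1 := add_comm _ _

lemma Connected.two_le_mecc_of_mem_mannulus (hG : G.Connected) {v : V} (hv : v ∈ G.mannulus) :
    2 ≤ G.mecc v := by
  have : Nonempty V := ⟨v⟩
  obtain ⟨c, hc⟩ := G.exists_mecc_eq_mrad
  obtain ⟨u, hu⟩ := G.exists_dist_eq_mecc v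
  have hrv := hv.1
  by_contra! hlt
  -- Otherwise `mrad = 0`, so the center `c` is at distance `0` from both `v` and `u`.
  have hcv : G.dist c v = 0 := by have := G.dist_le_mecc c v; omega
  have hcu : G.dist c u = 0 := by have := G.dist_le_mecc c u; omega
  rw [hG.dist_eq_zero_iff] at hcv hcu
  subst hcv hcu
  rw [dist_self] at hu
  omega

lemma Connected.exists_mem_mannulus_two_le_dist (hG : G.Connected) {v : V}
    (hv : v ∈ G.mannulus) : ∃ y ∈ G.mannulus, 2 ≤ G.dist v y := by
  obtain ⟨u, hu⟩ := G.exists_dist_eq_mecc v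
  have hv2 := hG.two_le_mecc_of_mem_mannulus hv
  have hvu : G.mecc v ≤ G.mecc u := hu ▸ G.dist_comm ▸ G.dist_le_mecc u v
  obtain ⟨hrv, hvd⟩ := hv
  by_cases huA : u ∈ G.mannulus
  · exact ⟨u, huA, hu ▸ hv2⟩
  have hud : G.mecc u = G.mdiam := by
    by_contra hne
    exact huA ⟨hrv.trans_le hvu, (G.mecc_le_mdiam u).lt_of_ne hne⟩
  have : Nonempty V := ⟨v⟩
  obtain ⟨c, hc⟩ := G.exists_mecc_eq_mrad
  obtain ⟨p, hp⟩ := hG.exists_walk_length_eq_dist c u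
  obtain ⟨y, hy, hyu⟩ := p.exists_eq_add_dist_le (fun _ _ ↦ hG.mecc_le_mecc_add_one)
    (m := G.mrad + 1) (by omega) (by omega)
  have hcu := G.dist_le_mecc c u
  have hvyu : G.dist v u ≤ G.dist v y + G.dist y u := hG.dist_triangle
  exact ⟨y, ⟨by omega, by omega⟩, by omega⟩

lemma Connected.four_le_card_of_two_le_mrad (hG : G.Connected) (hrad : 2 ≤ G.mrad) :
    4 ≤ Nat.card V := by
  obtain ⟨v⟩ := hG.nonempty
  obtain ⟨u, hu⟩ := G.exists_dist_eq_mecc v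
  obtain ⟨p, hp⟩ := hG.exists_walk_length_eq_dist v u
  obtain ⟨x, a, b, hxa, hab, -, hxb⟩ :=
    p.exists_adj_adj_not_adj_ne hp (by have := G.mrad_le_mecc v; omega)
  obtain ⟨z, hz⟩ := G.exists_dist_eq_mecc a
  have haz : 1 < G.dist a z := by have := G.mrad_le_mecc a; omega
  have hza : z ≠ a := by rintro rfl; simp at haz
  have hnadj : ¬G.Adj a z := fun h ↦ by simp [dist_eq_one_iff_adj.2 h] at haz
  have hset : ({x, a, b, z} : Set V).ncard = 4 := Set.ncard_eq_four.2
    ⟨x, a, b, z, hxa.ne, hxb, by rintro rfl; exact hnadj hxa.symm, hab.ne,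
      hza.symm, by rintro rfl; exact hnadj hab, rfl⟩
  exact hset ▸ Set.ncard_le_card _

end Finite

lemma one_lt_dist_induce {s : Set V} {a b : s} (hab : (G.induce s).Reachable a b)
    (h : 1 < G.dist a b) : 1 < (G.induce s).dist a b :=
  hab.one_lt_dist_of_ne_of_not_adj (fun hab' ↦ by subst hab'; simp at h)
    (fun hadj ↦ by rw [dist_eq_one_iff_adj.2 (induce_adj.1 hadj)] at h; exact h.false)

end SimpleGraph

theorem connected_annular_subgraph_radius_and_order_general
    {V : Type*} [Fintype V] (G : SimpleGraph V) (hG : G.Connected)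
    (hWc : (G.induce G.mannulus).Connected) :
    2 ≤ (G.induce G.mannulus).mrad ∧ 4 ≤ G.mannulus.ncard := by
  set W := G.induce G.mannulus
  have := hWc.nonempty
  have hecc (x : G.mannulus) : 2 ≤ W.mecc x := by
    obtain ⟨y, hy, hxy⟩ := hG.exists_mem_mannulus_two_le_dist x.2
    exact (SimpleGraph.one_lt_dist_induce (hWc.preconnected x ⟨y, hy⟩) hxy).trans_le (W.dist_le_mecc _ _)
  have hrad : 2 ≤ W.mrad := le_csInf (Set.range_nonempty _) (Set.forall_mem_range.2 hecc)
  exact ⟨hrad, hWc.four_le_card_of_two_le_mrad hrad⟩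

theorem connected_annular_subgraph_radius_and_order
    {V : Type*} [Fintype V] (G : SimpleGraph V) (hG : G.Connected)
    (hW : G.mannulus.Nonempty) (hWc : (G.induce G.mannulus).Connected) :
    2 ≤ (G.induce G.mannulus).mrad ∧ 4 ≤ G.mannulus.ncard :=
  connected_annular_subgraph_radius_and_order_general G hG hWc
end

section
/- Every connected simple graph of order 13 whose three metric subgraphs (central, annular, and peripheral subgraphs) are each isomorphic to a path P_m for some m ≥ 1 has at least 22 edges. -/
set_option linter.unusedSectionVars false
set_option linter.unusedVariables false
set_option maxHeartbeats 1600000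

open SimpleGraph


/-- All three metric subgraphs are (nonempty) paths. -/
noncomputable def metricSubgraphsArePaths {V : Type*} (G : SimpleGraph V) : Prop :=
  (∃ m : ℕ, 1 ≤ m ∧ Nonempty (G.induce G.mcenter ≃g SimpleGraph.pathGraph m)) ∧
  (∃ m : ℕ, 1 ≤ m ∧ Nonempty (G.induce G.mannulus ≃g SimpleGraph.pathGraph m)) ∧
  (∃ m : ℕ, 1 ≤ m ∧ Nonempty (G.induce G.mperiphery ≃g SimpleGraph.pathGraph m))

namespace MP

variable {V : Type*} [Fintype V] {G : SimpleGraph V}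

lemma dist_le_mecc (v u : V) : G.dist v u ≤ G.mecc v :=
  le_csSup ((Set.finite_range _).bddAbove) ⟨u, rfl⟩

lemma exists_mecc [Nonempty V] (v : V) : ∃ u, G.dist v u = G.mecc v :=
  Nat.sSup_mem (Set.range_nonempty _) ((Set.finite_range _).bddAbove)

lemma mrad_le_mecc (v : V) : G.mrad ≤ G.mecc v :=
  Nat.sInf_le ⟨v, rfl⟩

lemma mecc_le_mdiam [Nonempty V] (v : V) : G.mecc v ≤ G.mdiam :=
  le_csSup ((Set.finite_range _).bddAbove) ⟨v, rfl⟩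

lemma exists_center [Nonempty V] (G : SimpleGraph V) : ∃ v, G.mecc v = G.mrad :=
  Nat.sInf_mem (Set.range_nonempty _)

lemma exists_periph [Nonempty V] (G : SimpleGraph V) : ∃ v, G.mecc v = G.mdiam :=
  Nat.sSup_mem (Set.range_nonempty _) ((Set.finite_range _).bddAbove)

lemma mecc_le_of_forall (v : V) (k : ℕ) (h : ∀ u, G.dist v u ≤ k) : G.mecc v ≤ k := by
  have : Nonempty V := ⟨v⟩
  exact csSup_le (Set.range_nonempty _) (by rintro _ ⟨u, rfl⟩; exact h u)

lemma mecc_le_add (hG : G.Connected) (u v : V) : G.mecc v ≤ G.dist v u + G.mecc u := by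
  have : Nonempty V := ⟨v⟩
  refine mecc_le_of_forall v _ (fun z => ?_)
  calc G.dist v z ≤ G.dist v u + G.dist u z := hG.dist_triangle
    _ ≤ G.dist v u + G.mecc u := by gcongr; exact dist_le_mecc u z

lemma dist_le_one_of_adj {u v : V} (h : G.Adj u v) : G.dist u v ≤ 1 :=
  le_of_eq (SimpleGraph.dist_eq_one_iff_adj.2 h)

lemma mecc_le_succ_of_adj (hG : G.Connected) {u v : V} (h : G.Adj u v) :
    G.mecc v ≤ G.mecc u + 1 := by
  have h1 := mecc_le_add hG u v
  have h2 : G.dist v u ≤ 1 := dist_le_one_of_adj h.symm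
  omega

lemma exists_middle {u v : V} (h : G.dist u v = 2) : ∃ t, G.Adj u t ∧ G.Adj t v := by
  have hr : G.Reachable u v := SimpleGraph.Reachable.of_dist_ne_zero (by omega)
  obtain ⟨ww, hw⟩ := hr.exists_walk_length_eq_dist
  rw [h] at hw
  refine ⟨ww.getVert 1, ?_, ?_⟩
  · have := ww.adj_getVert_succ (i := 0) (by omega)
    simpa using this
  · have h2 := ww.adj_getVert_succ (i := 1) (by omega)
    have h3 : ww.getVert 2 = v := by
      have h4 := ww.getVert_length
      rw [hw] at h4; exact h4
    rwa [h3] at h2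

/- ## Structure lemmas -/

lemma mem_tri [Nonempty V] (v : V) :
    v ∈ G.mcenter ∨ v ∈ G.mannulus ∨ v ∈ G.mperiphery := by
  have h1 := mrad_le_mecc (G := G) v
  have h2 := mecc_le_mdiam (G := G) v
  simp only [SimpleGraph.mcenter, SimpleGraph.mannulus, SimpleGraph.mperiphery,
    Set.mem_setOf_eq]
  omega

lemma no_CP (hG : G.Connected) (hgap : G.mrad + 2 ≤ G.mdiam)
    {u v : V} (hu : u ∈ G.mcenter) (hv : v ∈ G.mperiphery) : ¬G.Adj u v := by
  intro h
  have := mecc_le_succ_of_adj hG h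
  simp only [SimpleGraph.mcenter, Set.mem_setOf_eq] at hu
  simp only [SimpleGraph.mperiphery, Set.mem_setOf_eq] at hv
  omega

lemma partner (hG : G.Connected) [Nonempty V] {p : V} (hp : p ∈ G.mperiphery) :
    ∃ q, q ∈ G.mperiphery ∧ G.dist p q = G.mdiam := by
  obtain ⟨q, hq⟩ := exists_mecc (G := G) p
  simp only [SimpleGraph.mperiphery, Set.mem_setOf_eq] at hp ⊢
  refine ⟨q, ?_, by rw [hq, hp]⟩
  have h1 : G.dist q p ≤ G.mecc q := dist_le_mecc q p
  have h2 : G.dist q p = G.dist p q := SimpleGraph.dist_comm ..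
  have h3 := mecc_le_mdiam (G := G) q
  omega

lemma dist_to_center {c : V} (hc : c ∈ G.mcenter) (v : V) : G.dist v c ≤ G.mrad := by
  have h1 : G.dist c v ≤ G.mecc c := dist_le_mecc c v
  have h2 : G.dist c v = G.dist v c := SimpleGraph.dist_comm ..
  simp only [SimpleGraph.mcenter, Set.mem_setOf_eq] at hc
  omega

/-- For radius 2 and diameter ≥ 4, every peripheral vertex has an annular
neighbour adjacent to the given central vertex. -/
lemma witness_r2 (hG : G.Connected) (hr : G.mrad = 2) (hd : 4 ≤ G.mdiam)
    {c0 p : V} (hc : c0 ∈ G.mcenter) (hp : p ∈ G.mperiphery) :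
    ∃ t, t ∈ G.mannulus ∧ G.Adj p t ∧ G.Adj t c0 := by
  have : Nonempty V := ⟨p⟩
  have hd1 : G.dist p c0 ≤ 2 := hr ▸ dist_to_center hc p
  simp only [SimpleGraph.mcenter, Set.mem_setOf_eq] at hc
  simp only [SimpleGraph.mperiphery, Set.mem_setOf_eq] at hp
  have hne : p ≠ c0 := by intro h; rw [h] at hp; omega
  have hnadj : ¬G.Adj c0 p := by
    intro h
    have := mecc_le_succ_of_adj hG h
    omega
  have hd0 : G.dist p c0 ≠ 0 := by
    have := hG.pos_dist_of_ne hne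
    omega
  have hd2 : G.dist p c0 = 2 := by
    rcases Nat.lt_or_ge (G.dist p c0) 2 with h | h
    · interval_cases h' : G.dist p c0
      · omega
      · exact absurd (SimpleGraph.dist_eq_one_iff_adj.1 h').symm hnadj
    · omega
  obtain ⟨t, ht1, ht2⟩ := exists_middle hd2
  have he1 : G.mecc t ≤ 3 := by
    have := mecc_le_succ_of_adj hG ht2.symm
    omega
  have he2 : 3 ≤ G.mecc t := by
    have := mecc_le_succ_of_adj hG ht1.symm
    omega
  refine ⟨t, ?_, ht1, ht2⟩
  simp only [SimpleGraph.mannulus, Set.mem_setOf_eq]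
  omega

/-- Every walk from a peripheral vertex to a central vertex passes through
the annulus strictly before its end. -/
lemma exit_annulus (hG : G.Connected) (hgap : G.mrad + 2 ≤ G.mdiam) :
    ∀ {z cc : V} (w : G.Walk z cc), z ∈ G.mperiphery → cc ∈ G.mcenter →
      ∃ t ∈ G.mannulus, G.dist z t + 1 ≤ w.length := by
  intro z cc w
  induction w with
  | nil =>
    intro hz hcc
    simp only [SimpleGraph.mperiphery, Set.mem_setOf_eq] at hz
    simp only [SimpleGraph.mcenter, Set.mem_setOf_eq] at hcc
    omega
  | @cons z u cc hadj w' ih =>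
    intro hz hcc
    have : Nonempty V := ⟨z⟩
    rcases mem_tri (G := G) u with hu | hu | hu
    · exact absurd hadj.symm (no_CP hG hgap hu hz)
    · refine ⟨u, hu, ?_⟩
      have h1 : G.dist z u ≤ 1 := dist_le_one_of_adj hadj
      have h2 : w'.length ≠ 0 := by
        intro h0
        have := SimpleGraph.Walk.eq_of_length_eq_zero h0
        subst this
        simp only [SimpleGraph.mannulus, Set.mem_setOf_eq] at hu
        simp only [SimpleGraph.mcenter, Set.mem_setOf_eq] at hcc
        omega
      simp only [SimpleGraph.Walk.length_cons]
      omega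
    · obtain ⟨t, ht, hlen⟩ := ih hu hcc
      refine ⟨t, ht, ?_⟩
      have h1 : G.dist z t ≤ G.dist z u + G.dist u t := hG.dist_triangle
      have h2 : G.dist z u ≤ 1 := dist_le_one_of_adj hadj
      simp only [SimpleGraph.Walk.length_cons]
      omega


instance pgDecAdj (m : ℕ) : DecidableRel (SimpleGraph.pathGraph m).Adj := fun _ _ =>
  decidable_of_iff _ SimpleGraph.pathGraph_adj.symm

/-- A walk in the path graph from `i` to `i + k`. -/
lemma pg_walk (m k : ℕ) : ∀ i : ℕ, (h : i + k < m) →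
    ∃ w : (SimpleGraph.pathGraph m).Walk ⟨i, by omega⟩ ⟨i + k, h⟩, w.length = k := by
  induction k with
  | zero => intro i h; exact ⟨SimpleGraph.Walk.nil.copy rfl (by simp), by simp⟩
  | succ k ih =>
    intro i h
    have hadj : (SimpleGraph.pathGraph m).Adj ⟨i, by omega⟩ ⟨i + 1, by omega⟩ :=
      SimpleGraph.pathGraph_adj.2 (Or.inl rfl)
    obtain ⟨w, hw⟩ := ih (i + 1) (by omega)
    refine ⟨(SimpleGraph.Walk.cons hadj w).copy rfl (by congr 1; omega), by simp [hw]⟩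

/-- In the path graph, there is a walk between any two vertices
of length the separation of indices. -/
lemma pg_dist (m : ℕ) (i j : Fin m) :
    ∃ w : (SimpleGraph.pathGraph m).Walk i j, w.length = max (j.val - i.val) (i.val - j.val) := by
  rcases le_total i.val j.val with h | h
  · obtain ⟨w, hw⟩ := pg_walk m (j.val - i.val) i.val (by omega)
    refine ⟨w.copy (by simp) (by congr 1; omega), by simpa [hw] using by omega⟩
  · obtain ⟨w, hw⟩ := pg_walk m (i.val - j.val) j.val (by omega)
    refine ⟨(w.copy (by simp) (by congr 1; omega)).reverse, by simpa [hw] using by omega⟩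

variable {V : Type*} [Fintype V] {G : SimpleGraph V}

/-- Transport a walk in the path graph to a `G`-walk via the iso of an induced subgraph. -/
lemma dist_le_sep {S : Set V} {m : ℕ} (φ : G.induce S ≃g SimpleGraph.pathGraph m)
    (u v : S) :
    G.dist u v ≤ max ((φ v).val - (φ u).val) ((φ u).val - (φ v).val) := by
  obtain ⟨w, hw⟩ := pg_dist m (φ u) (φ v)
  let F : SimpleGraph.pathGraph m →g G :=
    (SimpleGraph.Embedding.induce S).toHom.comp φ.symm.toHom
  have hu : F (φ u) = u := by
    simp [F, SimpleGraph.Embedding.induce]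
  have hv : F (φ v) = v := by
    simp [F, SimpleGraph.Embedding.induce]
  have := SimpleGraph.dist_le ((w.map F).copy hu hv)
  rwa [Walk.length_copy, Walk.length_map, hw] at this

/-- Adjacency transport through the iso. -/
lemma adj_iff_pg {S : Set V} {m : ℕ} (φ : G.induce S ≃g SimpleGraph.pathGraph m)
    (u v : S) : G.Adj u v ↔ (SimpleGraph.pathGraph m).Adj (φ u) (φ v) := by
  exact (φ.map_adj_iff).symm

/-- Boundary pair: if a subclass of `S` is neither empty nor everything,
there are `G`-adjacent `p ∈ S`, `p' ∈ S` with `p` in the class and `p'` not. -/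
lemma boundary_pair {S : Set V} {m : ℕ} (hm : 1 ≤ m)
    (φ : G.induce S ≃g SimpleGraph.pathGraph m) (Q : V → Prop)
    {p0 p1 : V} (hp0 : p0 ∈ S) (hp1 : p1 ∈ S) (hQ0 : Q p0) (hQ1 : ¬Q p1) :
    ∃ p ∈ S, ∃ p' ∈ S, G.Adj p p' ∧ Q p ∧ ¬Q p' := by
  obtain ⟨m', rfl⟩ : ∃ m', m = m' + 1 := ⟨m - 1, by omega⟩
  have hconn : (G.induce S).Connected :=
    (SimpleGraph.Iso.connected_iff φ).2 (SimpleGraph.pathGraph_connected m')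
  have hreach := hconn ⟨p0, hp0⟩ ⟨p1, hp1⟩
  obtain ⟨w⟩ := hreach
  obtain ⟨d, _hd, hds, hde⟩ := w.exists_boundary_dart {x : S | Q x.val} hQ0 hQ1
  refine ⟨d.fst.val, d.fst.property, d.snd.val, d.snd.property, ?_, hds, hde⟩
  exact d.adj

/-- In a path on at most 4 vertices there is no independent triple. -/
lemma no_indep_triple {S : Set V} {m : ℕ} (hm : m ≤ 4)
    (φ : G.induce S ≃g SimpleGraph.pathGraph m)
    {u w t : V} (hu : u ∈ S) (hw : w ∈ S) (ht : t ∈ S)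
    (huw : u ≠ w) (hut : u ≠ t) (hwt : w ≠ t)
    (nuw : ¬G.Adj u w) (nut : ¬G.Adj u t) (nwt : ¬G.Adj w t) : False := by
  set i := φ ⟨u, hu⟩ with hi
  set j := φ ⟨w, hw⟩ with hj
  set k := φ ⟨t, ht⟩ with hk
  have hij : i ≠ j := by
    simp only [hi, hj, ne_eq, EmbeddingLike.apply_eq_iff_eq, Subtype.mk.injEq]; exact huw
  have hik : i ≠ k := by
    simp only [hi, hk, ne_eq, EmbeddingLike.apply_eq_iff_eq, Subtype.mk.injEq]; exact hut
  have hjk : j ≠ k := by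
    simp only [hj, hk, ne_eq, EmbeddingLike.apply_eq_iff_eq, Subtype.mk.injEq]; exact hwt
  have nij : ¬(SimpleGraph.pathGraph m).Adj i j := fun h => nuw ((adj_iff_pg φ _ _).2 h)
  have nik : ¬(SimpleGraph.pathGraph m).Adj i k := fun h => nut ((adj_iff_pg φ _ _).2 h)
  have njk : ¬(SimpleGraph.pathGraph m).Adj j k := fun h => nwt ((adj_iff_pg φ _ _).2 h)
  rw [SimpleGraph.pathGraph_adj] at nij nik njk
  have h1 : i.val < m := i.isLt
  have h2 : j.val < m := j.isLt
  have h3 : k.val < m := k.isLt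
  have h4 : i.val ≠ j.val := fun h => hij (Fin.ext h)
  have h5 : i.val ≠ k.val := fun h => hik (Fin.ext h)
  have h6 : j.val ≠ k.val := fun h => hjk (Fin.ext h)
  omega

/-- In a path on at most 2 vertices, any two vertices are equal or adjacent. -/
lemma eq_or_adj_of_le_two {S : Set V} {m : ℕ} (hm : m ≤ 2)
    (φ : G.induce S ≃g SimpleGraph.pathGraph m)
    {u w : V} (hu : u ∈ S) (hw : w ∈ S) : u = w ∨ G.Adj u w := by
  by_cases h : u = w
  · exact Or.inl h
  right
  have hne : φ ⟨u, hu⟩ ≠ φ ⟨w, hw⟩ := by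
    simp only [ne_eq, EmbeddingLike.apply_eq_iff_eq, Subtype.mk.injEq]; exact h
  refine (adj_iff_pg φ ⟨u, hu⟩ ⟨w, hw⟩).2 ?_
  rw [SimpleGraph.pathGraph_adj]
  have h1 := (φ ⟨u, hu⟩).isLt
  have h2 := (φ ⟨w, hw⟩).isLt
  have h3 : (φ ⟨u, hu⟩).val ≠ (φ ⟨w, hw⟩).val := fun h' => hne (Fin.ext h')
  omega

lemma card_of_iso {S : Set V} {m : ℕ} (φ : G.induce S ≃g SimpleGraph.pathGraph m) :
    Nat.card S = m := by
  have := Nat.card_congr φ.toEquiv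
  simpa using this


-- KILLS fragment

lemma chain2 (hG : G.Connected) {p t q : V} (h1 : G.Adj p t) (h2 : G.Adj q t) :
    G.dist p q ≤ 2 := by
  have h := hG.dist_triangle (u := p) (v := t) (w := q)
  have a1 := dist_le_one_of_adj h1
  have a2 : G.dist t q ≤ 1 := dist_le_one_of_adj h2.symm
  omega

lemma chain3 (hG : G.Connected) {p x y q : V} (h1 : G.Adj p x) (h2 : G.Adj x y)
    (h3 : G.Adj q y) : G.dist p q ≤ 3 := by
  have t1 := hG.dist_triangle (u := p) (v := x) (w := q)
  have t2 := hG.dist_triangle (u := x) (v := y) (w := q)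
  have a1 := dist_le_one_of_adj h1
  have a2 := dist_le_one_of_adj h2
  have a3 : G.dist y q ≤ 1 := dist_le_one_of_adj h3.symm
  omega

lemma kill_mono (hG : G.Connected) [Nonempty V] (hd4 : G.mdiam = 4) (u : V)
    (hall : ∀ p ∈ G.mperiphery, G.Adj p u) : False := by
  obtain ⟨p0, hp0⟩ := exists_periph G
  have hp0' : p0 ∈ G.mperiphery := hp0
  obtain ⟨q, hq, hdist⟩ := partner hG hp0'
  have h2 := chain2 hG (hall p0 hp0') (hall q hq)
  omega

/-- The two-marks kill. -/
lemma U_kill (hG : G.Connected) [Nonempty V] (hd4 : G.mdiam = 4)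
    {m : ℕ} (hm : 1 ≤ m) (φP : G.induce G.mperiphery ≃g SimpleGraph.pathGraph m)
    (w : V → V) (hw : ∀ p ∈ G.mperiphery, G.Adj p (w p))
    (α β : V) (hU : ∀ p ∈ G.mperiphery, w p = α ∨ w p = β) : False := by
  obtain ⟨p00, hp00⟩ := exists_periph G
  have hp00' : p00 ∈ G.mperiphery := hp00
  by_cases hallsame : ∀ p ∈ G.mperiphery, w p = w p00
  · exact kill_mono hG hd4 (w p00) (fun p hp => (hallsame p hp) ▸ hw p hp)
  push_neg at hallsame
  obtain ⟨p1, hp1, hne1⟩ := hallsame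
  obtain ⟨pa, hpa, pb, hpb, hadj, hQa, hQb⟩ :=
    boundary_pair hm φP (fun v => w v = w p00) hp00' hp1 rfl hne1
  obtain ⟨q, hqP, hq4⟩ := partner hG hpa
  rw [hd4] at hq4
  have hqval := hU q hqP
  have haval := hU pa hpa
  have hbval := hU pb hpb
  have hpaq : w q ≠ w pa := by
    intro heq
    have := chain2 hG (hw pa hpa) (heq ▸ hw q hqP)
    omega
  have hpbq : w q ≠ w pb := by
    intro heq
    have := chain3 hG hadj (hw pb hpb) (heq ▸ hw q hqP)
    omega
  have hpapb : w pa ≠ w pb := by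
    intro heq; exact hQb (heq ▸ hQa)
  rcases hqval with h|h <;> rcases haval with h'|h' <;> rcases hbval with h''|h'' <;>
    simp_all

lemma third_eq {X : Type*} {a b c x y u v : X} (hab : a ≠ b) (hac : a ≠ c) (hbc : b ≠ c)
    (hx : x = a ∨ x = b ∨ x = c) (hy : y = a ∨ y = b ∨ y = c)
    (hu : u = a ∨ u = b ∨ u = c) (hv : v = a ∨ v = b ∨ v = c)
    (huv : u ≠ v) (hxu : x ≠ u) (hxv : x ≠ v) (hyu : y ≠ u) (hyv : y ≠ v) : x = y := by
  rcases hx with rfl|rfl|rfl <;> rcases hy with rfl|rfl|rfl <;>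
    rcases hu with rfl|rfl|rfl <;> rcases hv with rfl|rfl|rfl <;> simp_all

lemma third_or {X : Type*} {a b c x u v t : X} (hab : a ≠ b) (hac : a ≠ c) (hbc : b ≠ c)
    (hx : x = a ∨ x = b ∨ x = c) (hu : u = a ∨ u = b ∨ u = c)
    (hv : v = a ∨ v = b ∨ v = c) (ht : t = a ∨ t = b ∨ t = c)
    (huv : u ≠ v) (hut : u ≠ t) (hvt : v ≠ t) (hxt : x ≠ t) : x = u ∨ x = v := by
  rcases hx with rfl|rfl|rfl <;> rcases hu with rfl|rfl|rfl <;>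
    rcases hv with rfl|rfl|rfl <;> rcases ht with rfl|rfl|rfl <;> simp_all

/-- The three-marks kill. -/
lemma marks3_kill (hG : G.Connected) [Nonempty V] (hd4 : G.mdiam = 4)
    {m : ℕ} (hm : 1 ≤ m) (φP : G.induce G.mperiphery ≃g SimpleGraph.pathGraph m)
    {b : ℕ} (hb : b ≤ 4) (φA : G.induce G.mannulus ≃g SimpleGraph.pathGraph b)
    (w : V → V) (hw : ∀ p ∈ G.mperiphery, w p ∈ G.mannulus ∧ G.Adj p (w p))
    (α β γ : V) (hab : α ≠ β) (hac : α ≠ γ) (hbc : β ≠ γ)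
    (hU : ∀ p ∈ G.mperiphery, w p = α ∨ w p = β ∨ w p = γ) : False := by
  obtain ⟨p00, hp00⟩ := exists_periph G
  have hp00' : p00 ∈ G.mperiphery := hp00
  have key : ∀ p p', p ∈ G.mperiphery → p' ∈ G.mperiphery → G.Adj p p' →
      ∃ q ∈ G.mperiphery, w q ≠ w p ∧ w q ≠ w p' ∧ ¬G.Adj (w p) (w q) := by
    intro p p' hp hp' hadj
    obtain ⟨q, hqP, hq4⟩ := partner hG hp
    rw [hd4] at hq4
    refine ⟨q, hqP, ?_, ?_, ?_⟩
    · intro heq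
      have := chain2 hG (hw p hp).2 (heq ▸ (hw q hqP).2)
      omega
    · intro heq
      have := chain3 hG hadj (hw p' hp').2 (heq ▸ (hw q hqP).2)
      omega
    · intro hadj2
      have := chain3 hG (hw p hp).2 hadj2 (hw q hqP).2
      omega
  by_cases hallsame : ∀ p ∈ G.mperiphery, w p = w p00
  · exact kill_mono hG hd4 (w p00) (fun p hp => (hallsame p hp) ▸ (hw p hp).2)
  push_neg at hallsame
  obtain ⟨p1, hp1, hne1⟩ := hallsame
  obtain ⟨pa, hpa, pb, hpb, hadjab, hQa, hQb⟩ :=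
    boundary_pair hm φP (fun v => w v = w p00) hp00' hp1 rfl hne1
  have hpapb : w pa ≠ w pb := by intro heq; exact hQb (heq ▸ hQa)
  obtain ⟨q1, hq1P, hq1a, hq1b, hq1n⟩ := key pa pb hpa hpb hadjab
  obtain ⟨q2, hq2P, hq2a, hq2b, hq2n⟩ := key pb pa hpb hpa hadjab.symm
  have hVa := hU pa hpa
  have hVb := hU pb hpb
  have hV1 := hU q1 hq1P
  have hV2 := hU q2 hq2P
  have hq12 : w q1 = w q2 :=
    third_eq hab hac hbc hV1 hV2 hVa hVb hpapb hq1a hq1b hq2b hq2a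
  have hq2n' : ¬G.Adj (w pb) (w q1) := by rw [hq12]; exact hq2n
  obtain ⟨pc, hpc, pd, hpd, hadjcd, hQc, hQd⟩ :=
    boundary_pair hm φP (fun v => w v = w q1) hq1P hpa rfl (fun h => hq1a h.symm)
  obtain ⟨q3, hq3P, hq3a, hq3b, hq3n⟩ := key pc pd hpc hpd hadjcd
  obtain ⟨q4, hq4P, hq4a, hq4b, hq4n⟩ := key pd pc hpd hpc hadjcd.symm
  have hVd := hU pd hpd
  have hV4 := hU q4 hq4P
  -- w pd is w pa or w pb ; w q4 is the other
  have hd_or : w pd = w pa ∨ w pd = w pb :=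
    third_or hab hac hbc hVd hVa hVb hV1 hpapb
      (fun h => hq1a h.symm) (fun h => hq1b h.symm) hQd
  have hq4c : w q4 ≠ w q1 := by rw [← hQc]; exact hq4b
  have hnab : ¬G.Adj (w pa) (w pb) := by
    rcases hd_or with hd|hd
    · have h4 : w q4 = w pb :=
        third_eq hab hac hbc hV4 hVb hVd hV1 hQd hq4a hq4c
          (fun h => hpapb (h.trans hd).symm) (fun h => hq1b h.symm)
      rw [← hd, ← h4]; exact hq4n
    · have h4 : w q4 = w pa :=
        third_eq hab hac hbc hV4 hVa hVd hV1 hQd hq4a hq4c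
          (fun h => hpapb (h.trans hd)) (fun h => hq1a h.symm)
      intro hadj'
      rw [← hd] at hadj'
      rw [← h4] at hadj'
      exact hq4n hadj'.symm
  exact no_indep_triple hb φA (hw pa hpa).1 (hw pb hpb).1 (hw q1 hq1P).1
    hpapb (fun h => hq1a h.symm) (fun h => hq1b h.symm)
    hnab hq1n hq2n'

-- COUNTING fragment

lemma sym2_exists_mem (x : Sym2 V) : ∃ a, a ∈ x := by
  induction x using Sym2.ind with
  | _ u v => exact ⟨u, Sym2.mem_mk_left u v⟩

lemma induce_image_sub (S : Set V) :
    Sym2.map (Subtype.val : S → V) '' (G.induce S).edgeSet ⊆ G.edgeSet := by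
  rintro e ⟨e', he', rfl⟩
  induction e' using Sym2.ind with
  | _ u v =>
    rw [Sym2.map_pair_eq]
    rw [SimpleGraph.mem_edgeSet] at he' ⊢
    exact he'

lemma induce_image_mem {S : Set V} {x : Sym2 V}
    (hx : x ∈ Sym2.map (Subtype.val : S → V) '' (G.induce S).edgeSet) :
    ∀ v ∈ x, v ∈ S := by
  obtain ⟨e', _, rfl⟩ := hx
  induction e' using Sym2.ind with
  | _ u v =>
    intro z hz
    rw [Sym2.map_pair_eq, Sym2.mem_iff] at hz
    rcases hz with rfl | rfl
    exacts [u.property, v.property]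

lemma ncard_induce_edges {S : Set V} {m : ℕ} (φ : G.induce S ≃g SimpleGraph.pathGraph m) :
    (G.induce S).edgeSet.ncard = (SimpleGraph.pathGraph m).edgeSet.ncard := by
  rw [← Nat.card_coe_set_eq, ← Nat.card_coe_set_eq]
  exact Nat.card_congr φ.mapEdgeSet

lemma pg_edges4 : (SimpleGraph.pathGraph 4).edgeSet.ncard = 3 := by
  rw [Set.ncard_eq_toFinset_card']
  decide

lemma pg_edges8 : (SimpleGraph.pathGraph 8).edgeSet.ncard = 7 := by
  rw [Set.ncard_eq_toFinset_card']
  decide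

lemma count_branch (hG : G.Connected) [Nonempty V]
    {c0 : V} (hc0 : c0 ∈ G.mcenter) (hgap : G.mrad + 2 ≤ G.mdiam)
    (φA : G.induce G.mannulus ≃g SimpleGraph.pathGraph 4)
    (φP : G.induce G.mperiphery ≃g SimpleGraph.pathGraph 8)
    (w : V → V) (hw : ∀ p ∈ G.mperiphery, w p ∈ G.mannulus ∧ G.Adj p (w p))
    (M : Set V) (hMsub : ∀ t ∈ M, t ∈ G.mannulus ∧ G.Adj c0 t) (hM4 : 4 ≤ M.ncard) :
    22 ≤ G.edgeSet.ncard := by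
  classical
  -- part disjointness
  have hCA : ∀ v, v ∈ G.mcenter → v ∈ G.mannulus → False := by
    intro v h1 h2
    simp only [SimpleGraph.mcenter, SimpleGraph.mannulus, Set.mem_setOf_eq] at h1 h2
    omega
  have hCP : ∀ v, v ∈ G.mcenter → v ∈ G.mperiphery → False := by
    intro v h1 h2
    simp only [SimpleGraph.mcenter, SimpleGraph.mperiphery, Set.mem_setOf_eq] at h1 h2
    omega
  have hAP : ∀ v, v ∈ G.mannulus → v ∈ G.mperiphery → False := by
    intro v h1 h2
    simp only [SimpleGraph.mannulus, SimpleGraph.mperiphery, Set.mem_setOf_eq] at h1 h2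
    omega
  set SA := Sym2.map (Subtype.val : G.mannulus → V) '' (G.induce G.mannulus).edgeSet with hSAdef
  set SP := Sym2.map (Subtype.val : G.mperiphery → V) '' (G.induce G.mperiphery).edgeSet
    with hSPdef
  set SCA := (fun t => s(c0, t)) '' M with hSCAdef
  set SAP := (fun p => s(p, w p)) '' G.mperiphery with hSAPdef
  -- cardinalities
  have cSA : SA.ncard = 3 := by
    rw [hSAdef, Set.ncard_image_of_injective _ (Sym2.map.injective Subtype.val_injective),
      ncard_induce_edges φA, pg_edges4]
  have cSP : SP.ncard = 7 := by
    rw [hSPdef, Set.ncard_image_of_injective _ (Sym2.map.injective Subtype.val_injective),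
      ncard_induce_edges φP, pg_edges8]
  have cSCA : SCA.ncard = M.ncard := by
    rw [hSCAdef]
    exact Set.ncard_image_of_injective _ (fun t t' h => Sym2.congr_right.1 h)
  have cSAP : SAP.ncard = 8 := by
    rw [hSAPdef]
    have : G.mperiphery.ncard = 8 := by
      rw [← Nat.card_coe_set_eq]
      have := Nat.card_congr φP.toEquiv
      simpa using this
    rw [← this]
    apply Set.ncard_image_of_injOn
    intro p hp p' hp' h
    rw [Sym2.eq_iff] at h
    rcases h with ⟨h1, _⟩ | ⟨h1, h2⟩
    · exact h1
    · exact absurd ((h1 ▸ (hw p' hp').1)) (fun hA => hAP p hA hp)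
  -- memberships of parts
  have memSA : ∀ x ∈ SA, ∀ v ∈ x, v ∈ G.mannulus := fun x hx => induce_image_mem hx
  have memSP : ∀ x ∈ SP, ∀ v ∈ x, v ∈ G.mperiphery := fun x hx => induce_image_mem hx
  -- subsets of the edge set
  have sSA : SA ⊆ G.edgeSet := induce_image_sub _
  have sSP : SP ⊆ G.edgeSet := induce_image_sub _
  have sSCA : SCA ⊆ G.edgeSet := by
    rintro e ⟨t, ht, rfl⟩
    rw [SimpleGraph.mem_edgeSet]
    exact (hMsub t ht).2
  have sSAP : SAP ⊆ G.edgeSet := by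
    rintro e ⟨p, hp, rfl⟩
    rw [SimpleGraph.mem_edgeSet]
    exact (hw p hp).2
  -- disjointness
  have dAP' : Disjoint SA SP := by
    rw [Set.disjoint_left]
    intro e heA heP
    obtain ⟨z, hz⟩ := sym2_exists_mem e
    exact hAP z (memSA e heA z hz) (memSP e heP z hz)
  have dACA : Disjoint SA SCA := by
    rw [Set.disjoint_left]
    rintro e heA ⟨t, ht, rfl⟩
    exact hCA c0 hc0 (memSA _ heA c0 (Sym2.mem_mk_left c0 t))
  have dAAP : Disjoint SA SAP := by
    rw [Set.disjoint_left]
    rintro e heA ⟨p, hp, rfl⟩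
    exact hAP p (memSA _ heA p (Sym2.mem_mk_left p (w p))) hp
  have dPCA : Disjoint SP SCA := by
    rw [Set.disjoint_left]
    rintro e heP ⟨t, ht, rfl⟩
    exact hCP c0 hc0 (memSP _ heP c0 (Sym2.mem_mk_left c0 t))
  have dPAP : Disjoint SP SAP := by
    rw [Set.disjoint_left]
    rintro e heP ⟨p, hp, rfl⟩
    have := memSP _ heP (w p) (Sym2.mem_mk_right p (w p))
    exact hAP (w p) (hw p hp).1 this
  have dCAAP : Disjoint SCA SAP := by
    rw [Set.disjoint_left]
    rintro e ⟨t, ht, rfl⟩ ⟨p, hp, hpe⟩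
    rw [Sym2.eq_iff] at hpe
    rcases hpe with ⟨h1, _⟩ | ⟨h1, h2⟩
    · exact hCP c0 hc0 (h1 ▸ hp)
    · exact hCA c0 hc0 (h2.symm ▸ (hw p hp).1)
  -- assemble
  have hsub : SA ∪ SP ∪ SCA ∪ SAP ⊆ G.edgeSet := by
    intro e he
    rcases he with ((h | h) | h) | h
    exacts [sSA h, sSP h, sSCA h, sSAP h]
  have hcard : (SA ∪ SP ∪ SCA ∪ SAP).ncard = 3 + 7 + M.ncard + 8 := by
    rw [Set.ncard_union_eq (by
        rw [Set.disjoint_union_left, Set.disjoint_union_left]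
        exact ⟨⟨dAAP, dPAP⟩, dCAAP⟩) (Set.toFinite _) (Set.toFinite _)]
    rw [Set.ncard_union_eq (by
        rw [Set.disjoint_union_left]
        exact ⟨dACA, dPCA⟩) (Set.toFinite _) (Set.toFinite _)]
    rw [Set.ncard_union_eq dAP' (Set.toFinite _) (Set.toFinite _)]
    rw [cSA, cSP, cSCA, cSAP]
  have hle := Set.ncard_le_ncard hsub (Set.toFinite _)
  omega

-- FINAL fragment

lemma periph_big (hG : G.Connected) [Nonempty V] {m : ℕ} (hm : 1 ≤ m)
    (φP : G.induce G.mperiphery ≃g SimpleGraph.pathGraph m) : 2 * G.mdiam ≤ m := by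
  set i : Fin m := ⟨m / 2, by omega⟩ with hidef
  set ps : G.mperiphery := φP.symm i with hpsdef
  have hps : (ps : V) ∈ G.mperiphery := ps.property
  obtain ⟨q, hq, hdist⟩ := partner hG hps
  have hd := dist_le_sep φP ps ⟨q, hq⟩
  have hφ : φP ps = i := by simp [hpsdef]
  rw [hφ] at hd
  have hdq : G.dist (ps : V) q = G.mdiam := hdist
  rw [hdq] at hd
  have hlt := (φP ⟨q, hq⟩).isLt
  rcases le_max_iff.1 hd with h | h <;>
    · simp only [hidef] at h
      omega

lemma kill_r3 (hG : G.Connected) [Nonempty V] (hgap : G.mrad + 2 ≤ G.mdiam)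
    (hA2 : ∀ t t', t ∈ G.mannulus → t' ∈ G.mannulus → G.dist t t' ≤ 1) : False := by
  obtain ⟨c0, hc0e⟩ := exists_center G
  have hc0 : c0 ∈ G.mcenter := hc0e
  obtain ⟨z0, hz0e⟩ := exists_periph G
  have hz0 : z0 ∈ G.mperiphery := hz0e
  obtain ⟨wk⟩ := hG z0 c0
  have hc0nP : c0 ∉ G.mperiphery := by
    simp only [SimpleGraph.mcenter, Set.mem_setOf_eq] at hc0
    simp only [SimpleGraph.mperiphery, Set.mem_setOf_eq]
    omega
  obtain ⟨dart, _, hdS, hdE⟩ := wk.exists_boundary_dart G.mperiphery hz0 hc0nP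
  have hadj : G.Adj dart.fst dart.snd := dart.adj
  have hpP : dart.fst ∈ G.mperiphery := hdS
  have huA : dart.snd ∈ G.mannulus := by
    rcases mem_tri (G := G) dart.snd with h | h | h
    · exact absurd hadj.symm (no_CP hG hgap h hpP)
    · exact h
    · exact absurd h hdE
  obtain ⟨q, hqP, hq⟩ := partner hG hpP
  obtain ⟨wq, hwq⟩ := (hG q c0).exists_walk_length_eq_dist
  obtain ⟨t, htA, htle⟩ := exit_annulus hG hgap wq hqP hc0
  rw [hwq] at htle
  have h1 : G.dist q c0 ≤ G.mrad := dist_to_center hc0 q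
  have c1 : G.dist dart.fst q ≤ G.dist dart.fst dart.snd + G.dist dart.snd q :=
    hG.dist_triangle
  have c2 : G.dist dart.snd q ≤ G.dist dart.snd t + G.dist t q := hG.dist_triangle
  have c3 : G.dist dart.snd t ≤ 1 := hA2 _ _ huA htA
  have c4 : G.dist t q = G.dist q t := SimpleGraph.dist_comm ..
  have c5 : G.dist dart.fst dart.snd ≤ 1 := dist_le_one_of_adj hadj
  omega

theorem main_thm {V : Type*} [Fintype V] (G : SimpleGraph V) (hG : G.Connected)
    (h13 : Fintype.card V = 13)
    (hmet : (∃ m : ℕ, 1 ≤ m ∧ Nonempty (G.induce G.mcenter ≃g SimpleGraph.pathGraph m)) ∧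
      (∃ m : ℕ, 1 ≤ m ∧ Nonempty (G.induce G.mannulus ≃g SimpleGraph.pathGraph m)) ∧
      (∃ m : ℕ, 1 ≤ m ∧ Nonempty (G.induce G.mperiphery ≃g SimpleGraph.pathGraph m))) :
    22 ≤ G.edgeSet.ncard := by
  classical
  have hNV : Nonempty V := by
    rw [← Fintype.card_pos_iff]; omega
  obtain ⟨⟨a, ha1, ⟨φC⟩⟩, ⟨b, hb1, ⟨φA⟩⟩, ⟨c, hc1, ⟨φP⟩⟩⟩ := hmet
  -- sizes
  have hCa : G.mcenter.ncard = a := by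
    rw [← Nat.card_coe_set_eq]
    have := Nat.card_congr φC.toEquiv; simpa using this
  have hAb : G.mannulus.ncard = b := by
    rw [← Nat.card_coe_set_eq]
    have := Nat.card_congr φA.toEquiv; simpa using this
  have hPc : G.mperiphery.ncard = c := by
    rw [← Nat.card_coe_set_eq]
    have := Nat.card_congr φP.toEquiv; simpa using this
  -- annulus nonempty gives the gap
  have hv0 : (φA.symm ⟨0, by omega⟩ : V) ∈ G.mannulus := (φA.symm ⟨0, by omega⟩).property
  have hgap : G.mrad + 2 ≤ G.mdiam := by
    simp only [SimpleGraph.mannulus, Set.mem_setOf_eq] at hv0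
    omega
  -- partition
  have hdisjCA : Disjoint G.mcenter G.mannulus := by
    rw [Set.disjoint_left]
    intro v h1 h2
    simp only [SimpleGraph.mcenter, SimpleGraph.mannulus, Set.mem_setOf_eq] at h1 h2
    omega
  have hdisjP : Disjoint (G.mcenter ∪ G.mannulus) G.mperiphery := by
    rw [Set.disjoint_left]
    intro v h1 h2
    have h3 := mrad_le_mecc (G := G) v
    have h4 := mecc_le_mdiam (G := G) v
    rcases h1 with h1 | h1 <;>
      simp only [SimpleGraph.mcenter, SimpleGraph.mannulus, SimpleGraph.mperiphery,
        Set.mem_setOf_eq] at h1 h2 <;> omega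
  have huniv : G.mcenter ∪ G.mannulus ∪ G.mperiphery = Set.univ := by
    ext v
    simp only [Set.mem_union, Set.mem_univ, iff_true]
    rcases mem_tri (G := G) v with h | h | h
    · exact Or.inl (Or.inl h)
    · exact Or.inl (Or.inr h)
    · exact Or.inr h
  have hsum : a + b + c = 13 := by
    have h := congrArg Set.ncard huniv
    rw [Set.ncard_union_eq hdisjP (Set.toFinite _) (Set.toFinite _),
      Set.ncard_union_eq hdisjCA (Set.toFinite _) (Set.toFinite _),
      Set.ncard_univ, Nat.card_eq_fintype_card, h13, hCa, hAb, hPc] at h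
    omega
  obtain ⟨c0, hc0e⟩ := exists_center G
  have hc0 : c0 ∈ G.mcenter := hc0e
  have hd2r : G.mdiam ≤ 2 * G.mrad := by
    obtain ⟨z, hze⟩ := exists_periph G
    have h1 := mecc_le_add hG c0 z
    have h2 := dist_to_center hc0 z
    rw [hze, hc0e] at h1
    omega
  have hcd : 2 * G.mdiam ≤ c := periph_big hG hc1 φP
  by_cases hr3 : 3 ≤ G.mrad
  · exfalso
    have hb2 : b ≤ 2 := by omega
    refine kill_r3 hG hgap (fun t t' ht ht' => ?_)
    rcases eq_or_adj_of_le_two hb2 φA ht ht' with rfl | hadj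
    · simp [SimpleGraph.dist_self]
    · exact dist_le_one_of_adj hadj
  · have hr2 : G.mrad = 2 := by omega
    have hd4 : G.mdiam = 4 := by omega
    have hwit : ∀ p : V, ∃ t, p ∈ G.mperiphery →
        (t ∈ G.mannulus ∧ G.Adj p t ∧ G.Adj t c0) := by
      intro p
      by_cases hp : p ∈ G.mperiphery
      · obtain ⟨t, h1, h2, h3⟩ := witness_r2 hG hr2 (by omega) hc0 hp
        exact ⟨t, fun _ => ⟨h1, h2, h3⟩⟩
      · exact ⟨c0, fun h => absurd h hp⟩
    choose w hw using hwit
    set M : Set V := {t | t ∈ G.mannulus ∧ G.Adj c0 t} with hMdef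
    have hwM : ∀ p ∈ G.mperiphery, w p ∈ M :=
      fun p hp => ⟨(hw p hp).1, (hw p hp).2.2.symm⟩
    have hMA : M ⊆ G.mannulus := fun t ht => ht.1
    have hMb : M.ncard ≤ b := by
      rw [← hAb]; exact Set.ncard_le_ncard hMA (Set.toFinite _)
    rcases lt_or_ge M.ncard 3 with hM | hM
    · exfalso
      obtain ⟨α, β, hcov⟩ : ∃ α β : V, M ⊆ {α, β} := by
        interval_cases hn : M.ncard
        · refine ⟨c0, c0, ?_⟩
          rw [(Set.ncard_eq_zero (Set.toFinite _)).1 hn]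
          exact Set.empty_subset _
        · obtain ⟨α, hα⟩ := Set.ncard_eq_one.1 hn
          exact ⟨α, α, by rw [hα]; intro x hx; simp at hx; simp [hx]⟩
        · obtain ⟨α, β, _, hM2⟩ := Set.ncard_eq_two.1 hn
          exact ⟨α, β, le_of_eq hM2⟩
      refine U_kill hG hd4 hc1 φP w (fun p hp => (hw p hp).2.1) α β (fun p hp => ?_)
      have := hcov (hwM p hp)
      simpa using this
    rcases lt_or_ge M.ncard 4 with hM3 | hM4
    · exfalso
      have h3 : M.ncard = 3 := by omega
      obtain ⟨α, β, γ, hab, hac, hbc, hMeq⟩ := Set.ncard_eq_three.1 h3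
      refine marks3_kill hG hd4 hc1 φP (by omega) φA w
        (fun p hp => ⟨(hw p hp).1, (hw p hp).2.1⟩) α β γ hab hac hbc (fun p hp => ?_)
      have := hwM p hp
      rw [hMeq] at this
      simpa using this
    · have hb4' : b = 4 := by omega
      have hc8' : c = 8 := by omega
      subst hb4'
      subst hc8'
      exact count_branch hG hc0 hgap φA φP w
        (fun p hp => ⟨(hw p hp).1, (hw p hp).2.1⟩) M (fun t ht => ⟨ht.1, ht.2⟩) hM4

end MP

theorem graph_order_13_path_metric_subgraphs_size_ge_22
    {V : Type*} [Fintype V] (G : SimpleGraph V) (hG : G.Connected)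
    (h13 : Fintype.card V = 13) (hmet : metricSubgraphsArePaths G) :
    22 ≤ G.edgeSet.ncard := by
  classical
  exact MP.main_thm G hG h13 hmet
end

section
/- There exists a connected simple graph of order 13 with exactly 22 edges whose three metric subgraphs (central, annular, and peripheral subgraphs) are each isomorphic to a path P_m for some m ≥ 1. -/
/-!
Number the vertices so that the hub `0` is joined to the four vertices of the path `1 - 2 - 3 - 4`,
the path `5 - 6 - ⋯ - 12` lies outside, and eight cross edges join the two paths. Breadth-first
search from every vertex shows that the hub has eccentricity 2, the vertices `1, …, 4` have
eccentricity 3 and the vertices `5, …, 12` have eccentricity 4, so the center, annulus and periphery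
are the three blocks `{0}`, `{1, …, 4}` and `{5, …, 12}`, which induce `P₁`, `P₄` and `P₈`.
-/

namespace SimpleGraph

variable {V : Type*} (G : SimpleGraph V)

section WalkBall

variable [Fintype V] [DecidableEq V] [DecidableRel G.Adj]

def walkBall (v : V) : ℕ → Finset V
  | 0 => {v}
  | k + 1 => walkBall v k ∪ ({u | ∃ w ∈ walkBall v k, G.Adj u w} : Finset V)

variable {G}

theorem mem_walkBall_iff {v u : V} {k : ℕ} :
    u ∈ G.walkBall v k ↔ ∃ p : G.Walk u v, p.length ≤ k := by
  induction k generalizing u with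
  | zero =>
    rw [walkBall, Finset.mem_singleton]
    constructor
    · rintro rfl
      exact ⟨.nil, le_rfl⟩
    · rintro ⟨p, hp⟩
      exact Walk.eq_of_length_eq_zero (Nat.le_zero.1 hp)
  | succ k ih =>
    simp only [walkBall, Finset.mem_union, Finset.mem_filter_univ]
    constructor
    · rintro (h | ⟨w, hw, hadj⟩)
      · obtain ⟨p, hp⟩ := ih.1 h
        exact ⟨p, by omega⟩
      · obtain ⟨p, hp⟩ := ih.1 hw
        exact ⟨.cons hadj p, by simp [hp]⟩
    · rintro ⟨_ | ⟨hadj, p⟩, hp⟩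
      · exact Or.inl (ih.2 ⟨.nil, Nat.zero_le k⟩)
      · exact Or.inr ⟨_, ih.2 ⟨p, by simpa using hp⟩, hadj⟩

theorem connected_of_forall_mem_walkBall {v : V} {k : ℕ} (h : ∀ u, u ∈ G.walkBall v k) :
    G.Connected := by
  have hreach (u : V) : G.Reachable u v := by
    obtain ⟨p, -⟩ := mem_walkBall_iff.1 (h u)
    exact ⟨p⟩
  have : Nonempty V := ⟨v⟩
  exact ⟨fun u w => (hreach u).trans (hreach w).symm⟩

theorem mecc_eq_of_walkBall {v : V} {k : ℕ} (hall : ∀ u, u ∈ G.walkBall v k)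
    (hfar : ∃ u, u ∉ G.walkBall v (k - 1)) : G.mecc v = k := by
  have hle (u : V) : G.dist v u ≤ k := by
    obtain ⟨p, hp⟩ := mem_walkBall_iff.1 (hall u)
    rw [dist_comm]
    exact (dist_le p).trans hp
  obtain ⟨u, hu⟩ := hfar
  have hge : k ≤ G.dist v u := by
    obtain ⟨p, -⟩ := mem_walkBall_iff.1 (hall u)
    obtain ⟨q, hq⟩ := p.reachable.exists_walk_length_eq_dist
    by_contra hlt
    exact hu (mem_walkBall_iff.2 ⟨q, by rw [hq, dist_comm]; omega⟩)
  have hbdd : BddAbove (Set.range (G.dist v)) := ⟨k, Set.forall_mem_range.2 hle⟩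
  exact le_antisymm (csSup_le ⟨_, v, rfl⟩ (Set.forall_mem_range.2 hle))
    (hge.trans (le_csSup hbdd ⟨u, rfl⟩))

end WalkBall

variable {G}

theorem mrad_eq_of_forall_le {r : ℕ} (hle : ∀ v, r ≤ G.mecc v) {v₀ : V} (h₀ : G.mecc v₀ = r) :
    G.mrad = r :=
  le_antisymm (Nat.sInf_le ⟨v₀, h₀⟩) (le_csInf ⟨_, v₀, rfl⟩ (Set.forall_mem_range.2 hle))

theorem mdiam_eq_of_forall_le {d : ℕ} (hle : ∀ v, G.mecc v ≤ d) {v₀ : V} (h₀ : G.mecc v₀ = d) :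
    G.mdiam = d :=
  le_antisymm (csSup_le ⟨_, v₀, rfl⟩ (Set.forall_mem_range.2 hle))
    (h₀ ▸ le_csSup ⟨d, Set.forall_mem_range.2 hle⟩ ⟨v₀, rfl⟩)

theorem nonempty_induce_iso_pathGraph {n : ℕ} {s : Set V} (f : Fin n → V)
    (hinj : Function.Injective f) (hadj : ∀ i j, G.Adj (f i) (f j) ↔ (pathGraph n).Adj i j)
    (hs : Set.range f = s) : Nonempty (G.induce s ≃g pathGraph n) :=
  hs ▸ ⟨(Embedding.isoInduceRange ⟨⟨f, hinj⟩, hadj _ _⟩).symm⟩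

end SimpleGraph

open SimpleGraph

def edges13 : List (Fin 13 × Fin 13) :=
  [(0, 1), (0, 2), (0, 3), (0, 4),
   (1, 2), (2, 3), (3, 4),
   (5, 6), (6, 7), (7, 8), (8, 9), (9, 10), (10, 11), (11, 12),
   (1, 9), (2, 6), (2, 7), (2, 8), (3, 5), (4, 10), (4, 11), (4, 12)]

def G13 : SimpleGraph (Fin 13) := fromRel fun a b => (a, b) ∈ edges13

instance : DecidableRel G13.Adj := fun a b => inferInstanceAs (Decidable (a ≠ b ∧ _))

def ecc13 (v : Fin 13) : ℕ := if v = 0 then 2 else if v ≤ 4 then 3 else 4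

def block (a m : ℕ) (h : a + m ≤ 13 := by norm_num) (i : Fin m) : Fin 13 := ⟨a + i, by omega⟩

theorem block_injective {a m : ℕ} (h : a + m ≤ 13) : Function.Injective (block a m h) :=
  fun i j hij => Fin.ext (by simpa [block] using hij)

theorem G13_connected : G13.Connected :=
  connected_of_forall_mem_walkBall (v := 0) (k := 2) (by decide)

theorem mecc_G13 (v : Fin 13) : G13.mecc v = ecc13 v :=
  mecc_eq_of_walkBall
    ((by decide : ∀ v u : Fin 13, u ∈ G13.walkBall v (ecc13 v)) v)
    ((by decide : ∀ v : Fin 13, ∃ u, u ∉ G13.walkBall v (ecc13 v - 1)) v)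

theorem mrad_G13 : G13.mrad = 2 :=
  mrad_eq_of_forall_le (fun v => by rw [mecc_G13]; unfold ecc13; split_ifs <;> omega)
    (v₀ := 0) (mecc_G13 0)

theorem mdiam_G13 : G13.mdiam = 4 :=
  mdiam_eq_of_forall_le (fun v => by rw [mecc_G13]; unfold ecc13; split_ifs <;> omega)
    (v₀ := 5) (mecc_G13 5)

theorem mcenter_G13 : Set.range (block 0 1) = G13.mcenter := by
  ext v
  simp only [mcenter, Set.mem_ofPred_eq, mecc_G13, mrad_G13, Set.mem_range]
  revert v
  decide

theorem mannulus_G13 : Set.range (block 1 4) = G13.mannulus := by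
  ext v
  simp only [mannulus, Set.mem_ofPred_eq, mecc_G13, mrad_G13, mdiam_G13, Set.mem_range]
  revert v
  decide

theorem mperiphery_G13 : Set.range (block 5 8) = G13.mperiphery := by
  ext v
  simp only [mperiphery, Set.mem_ofPred_eq, mecc_G13, mdiam_G13, Set.mem_range]
  revert v
  decide

theorem nonempty_induce_block_iso_pathGraph {a m : ℕ} {h : a + m ≤ 13} {s : Set (Fin 13)}
    (hadj : ∀ i j, G13.Adj (block a m h i) (block a m h j) ↔ i.val + 1 = j.val ∨ j.val + 1 = i.val)
    (hs : Set.range (block a m h) = s) : Nonempty (G13.induce s ≃g pathGraph m) :=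
  nonempty_induce_iso_pathGraph _ (block_injective h)
    (fun i j => (hadj i j).trans pathGraph_adj.symm) hs

theorem G13_edgeSet_ncard : G13.edgeSet.ncard = 22 := by
  rw [← coe_edgeFinset, Set.ncard_coe_finset]
  decide

theorem exists_graph_order_13_size_22_path_metric_subgraphs :
    ∃ G : SimpleGraph (Fin 13), G.Connected ∧ metricSubgraphsArePaths G ∧
      G.edgeSet.ncard = 22 :=
  ⟨G13, G13_connected,
    ⟨⟨1, le_rfl, nonempty_induce_block_iso_pathGraph (by decide) mcenter_G13⟩,
      ⟨4, by norm_num, nonempty_induce_block_iso_pathGraph (by decide) mannulus_G13⟩,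
      ⟨8, by norm_num, nonempty_induce_block_iso_pathGraph (by decide) mperiphery_G13⟩⟩,
    G13_edgeSet_ncard⟩
end

section
/- Let k and n be integers with 2 ≤ k ≤ n − 1 and kn even. Then there exists a k-regular simple graph of order n that contains a Hamiltonian cycle. -/
open SimpleGraph Pointwise

namespace SimpleGraph

variable {G : Type*} [AddGroup G] {s t : Set G}

theorem circulantGraph_mono (h : s ⊆ t) : circulantGraph s ≤ circulantGraph t := by
  intro u v huv
  simp only [circulantGraph_adj] at huv ⊢
  exact ⟨huv.1, huv.2.imp (@h _) (@h _)⟩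

theorem neighborSet_circulantGraph (hs : -s = s) (h0 : (0 : G) ∉ s) (v : G) :
    (circulantGraph s).neighborSet v = (· + v) '' s := by
  ext w
  have hneg : v - w ∈ s ↔ w - v ∈ s := by rw [← neg_sub, ← Set.mem_neg, hs]
  simp only [mem_neighborSet, circulantGraph_adj, hneg, or_self, Set.mem_image,
    ← eq_sub_iff_add_eq, exists_eq_right]
  refine ⟨And.right, fun h => ⟨fun hvw => h0 ?_, h⟩⟩
  rwa [hvw, sub_self] at h

theorem ncard_neighborSet_circulantGraph (hs : -s = s) (h0 : (0 : G) ∉ s) (v : G) :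
    ((circulantGraph s).neighborSet v).ncard = s.ncard := by
  rw [neighborSet_circulantGraph hs h0, Set.ncard_image_of_injective _ (add_left_injective v)]

theorem isHamiltonian_cycleGraph (n : ℕ) : (cycleGraph (n + 3)).IsHamiltonian := fun _ =>
  ⟨0, cycleGraph.cycle n,
    Walk.isHamiltonianCycle_iff_isCycle_and_length_eq.mpr ⟨cycleGraph.isCycle_cycle, by simp⟩⟩

theorem isHamiltonian_circulantGraph_of_one_mem {n : ℕ} {s : Set (Fin (n + 3))} (h1 : 1 ∈ s) :
    (circulantGraph s).IsHamiltonian :=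
  (isHamiltonian_cycleGraph n).mono <| by
    rw [cycleGraph_eq_circulantGraph]
    exact circulantGraph_mono (Set.singleton_subset_iff.mpr h1)

end SimpleGraph

namespace Fin

open scoped Fin.NatCast

variable {n : ℕ} [NeZero n]

theorem natCast_ne_zero_of_lt {i : ℕ} (hpos : 0 < i) (hlt : i < n) : (i : Fin n) ≠ 0 :=
  fun h => absurd (Nat.le_of_dvd hpos (Fin.natCast_eq_zero.mp h)) (by omega)

theorem natCast_ne_neg_natCast {i j : ℕ} (hpos : 0 < i + j) (hlt : i + j < n) :
    (i : Fin n) ≠ -(j : Fin n) := by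
  rw [Ne, eq_neg_iff_add_eq_zero, ← Nat.cast_add]
  exact natCast_ne_zero_of_lt hpos hlt

theorem injOn_natCast_Icc {r : ℕ} (hr : r < n) : Set.InjOn (Nat.cast : ℕ → Fin n) (Set.Icc 1 r) :=
  fun i hi j hj h => by
    simpa [Fin.val_cast_of_lt (hi.2.trans_lt hr), Fin.val_cast_of_lt (hj.2.trans_lt hr)]
      using congrArg Fin.val h

def symmIcc (n r : ℕ) [NeZero n] : Set (Fin n) :=
  ((↑) '' Set.Icc 1 r) ∪ -((↑) '' Set.Icc 1 r)

theorem neg_symmIcc (r : ℕ) : -symmIcc n r = symmIcc n r := by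
  rw [symmIcc, Set.union_neg, neg_neg, Set.union_comm]

theorem one_mem_symmIcc {r : ℕ} (hr : 1 ≤ r) : 1 ∈ symmIcc n r :=
  Or.inl ⟨1, ⟨le_rfl, hr⟩, Nat.cast_one⟩

theorem zero_notMem_symmIcc {r : ℕ} (hr : r < n) : 0 ∉ symmIcc n r := by
  rintro (⟨i, ⟨hi1, hir⟩, hi0⟩ | ⟨j, ⟨hj1, hjr⟩, hj0⟩)
  · exact natCast_ne_zero_of_lt (by omega) (by omega) hi0
  · exact natCast_ne_zero_of_lt (by omega) (by omega) (neg_zero (G := Fin n) ▸ hj0)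

theorem natCast_notMem_symmIcc {r m : ℕ} (hrm : r < m) (hmn : m + r < n) :
    (m : Fin n) ∉ symmIcc n r := by
  rintro (⟨i, ⟨hi1, hir⟩, hmi⟩ | ⟨j, ⟨hj1, hjr⟩, hmj⟩)
  · have := injOn_natCast_Icc (r := m) (by omega) ⟨hi1, by omega⟩ ⟨by omega, le_rfl⟩ hmi
    omega
  · exact natCast_ne_neg_natCast (by omega) (by omega) hmj

theorem ncard_symmIcc {r : ℕ} (hr : 2 * r < n) : (symmIcc n r).ncard = 2 * r := by
  have hdisj : Disjoint ((↑) '' Set.Icc 1 r) (-((↑) '' Set.Icc 1 r) : Set (Fin n)) := by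
    refine Set.disjoint_left.mpr ?_
    rintro _ ⟨i, ⟨hi1, hir⟩, rfl⟩ ⟨j, ⟨hj1, hjr⟩, hji⟩
    exact natCast_ne_neg_natCast (by omega) (by omega) hji
  rw [symmIcc, Set.ncard_union_eq hdisj, Set.ncard_neg,
    (injOn_natCast_Icc (by omega)).ncard_image, Set.ncard_Icc_nat]
  omega

theorem neg_natCast_half {m : ℕ} (hm : n = 2 * m) : -(m : Fin n) = m := by
  rw [neg_eq_iff_add_eq_zero, ← Nat.cast_add, ← two_mul, ← hm, Fin.natCast_self]

theorem exists_symmetric_jumps {k : ℕ} (hk : 2 ≤ k) (hkn : k < n) (he : Even (k * n)) :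
    ∃ s : Set (Fin n), s.ncard = k ∧ -s = s ∧ 0 ∉ s ∧ 1 ∈ s := by
  obtain ⟨r, rfl | rfl⟩ := Nat.even_or_odd' k
  · exact ⟨symmIcc n r, ncard_symmIcc hkn, neg_symmIcc r, zero_notMem_symmIcc (by omega),
      one_mem_symmIcc (by omega)⟩
  · obtain ⟨m, hm⟩ : ∃ m, n = 2 * m :=
      (Nat.even_mul.mp he).resolve_left (by simp) |>.two_dvd
    have hmr : (m : Fin n) ∉ symmIcc n r := natCast_notMem_symmIcc (by omega) (by omega)
    refine ⟨insert (m : Fin n) (symmIcc n r), ?_, ?_, ?_, ?_⟩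
    · rw [Set.ncard_insert_of_notMem hmr, ncard_symmIcc (by omega)]
    · rw [Set.neg_insert, neg_natCast_half hm, neg_symmIcc]
    · rintro (hm0 | h0)
      · exact natCast_ne_zero_of_lt (by omega) (by omega) hm0.symm
      · exact zero_notMem_symmIcc (by omega) h0
    · exact Set.mem_insert_of_mem _ (one_mem_symmIcc (by omega))

end Fin

theorem exists_hamiltonian_regular_graph
    (k n : ℕ) (hk : 2 ≤ k) (hkn : k + 1 ≤ n) (he : Even (k * n)) :
    ∃ G : SimpleGraph (Fin n), (∀ v, (G.neighborSet v).ncard = k) ∧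
      ∃ (v : Fin n) (p : G.Walk v v), p.IsHamiltonianCycle := by
  obtain ⟨m, rfl⟩ : ∃ m, n = m + 3 := ⟨n - 3, by omega⟩
  obtain ⟨s, hcard, hneg, h0, h1⟩ := Fin.exists_symmetric_jumps hk hkn he
  refine ⟨circulantGraph s, fun v => ?_, 0, ?_⟩
  · rw [ncard_neighborSet_circulantGraph hneg h0, hcard]
  · exact (isHamiltonian_circulantGraph_of_one_mem h1).exists_isHamiltonianCycle 0
end
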